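/- Let ε ∈ (0,1), and let ρ₀ = |ψ₀⟩⟨ψ₀|, ρ₁ = |ψ₁⟩⟨ψ₁| be pure qubit states such that either |ψ₀⟩ = |ψ₁⟩, or {|ψ₀⟩, |ψ₁⟩} = {√p|0⟩ + √(1−p)|1⟩, √p|0⟩ − √(1−p)|1⟩} for some p ∈ (0,1). Then for every n ≥ 1, the minimal probability of type-II error under ℤ₂-invariant measurements equals 1−ε: inf{ Tr(Z[ρ₁^{⊗n}] E) : E Hermitian on (ℂ²)^{⊗n}, 0 ≤ E ≤ I, Tr(Z[ρ₀^{⊗n}] E) ≥ 1−ε } = 1−ε. -/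
import Mathlib


open Matrix Complex Set Filter

noncomputable section

/-- Number of 1s in a bit string. -/
def ones {n : ℕ} (x : Fin n → Fin 2) : ℕ := (Finset.univ.filter fun i => x i = 1).card

/-- The `n`-fold tensor power of a one-qubit operator, as a matrix indexed by bit strings. -/
def mpow (n : ℕ) (ρ : Matrix (Fin 2) (Fin 2) ℂ) :
    Matrix (Fin n → Fin 2) (Fin n → Fin 2) ℂ :=
  Matrix.of fun x y => ∏ i, ρ (x i) (y i)

/-- The parity operator ω = σ_z^{⊗n}: it multiplies a computational basis vector by
(-1)^(number of 1s). -/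
def parityOp (n : ℕ) : Matrix (Fin n → Fin 2) (Fin n → Fin 2) ℂ :=
  Matrix.diagonal fun x => (-1 : ℂ) ^ ones x

/-- The ℤ₂-twirling Z[X] = ½ (X + ωXω). -/
def twirl {n : ℕ} (X : Matrix (Fin n → Fin 2) (Fin n → Fin 2) ℂ) :
    Matrix (Fin n → Fin 2) (Fin n → Fin 2) ℂ :=
  (2 : ℂ)⁻¹ • (X + parityOp n * X * parityOp n)

/-- Rank-one projection |ψ⟩⟨ψ| on one qubit. -/
def projv (ψ : Fin 2 → ℂ) : Matrix (Fin 2) (Fin 2) ℂ := vecMulVec ψ (star ψ)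

/-- Rank-one projection |ψ⟩⟨ψ| on n qubits. -/
def projN {n : ℕ} (ψ : (Fin n → Fin 2) → ℂ) :
    Matrix (Fin n → Fin 2) (Fin n → Fin 2) ℂ := vecMulVec ψ (star ψ)

def ket0 : Fin 2 → ℂ := ![1, 0]

def ket1 : Fin 2 → ℂ := ![0, 1]

/-- The qubit state √p |0⟩ + e^{iφ} √(1-p) |1⟩. -/
def qubit (p φ : ℝ) : Fin 2 → ℂ :=
  ![(Real.sqrt p : ℂ), Complex.exp (Complex.I * φ) * (Real.sqrt (1 - p) : ℂ)]

/-- The qubit state √p |0⟩ + √(1-p) |1⟩. -/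
def qubitR (p : ℝ) : Fin 2 → ℂ := ![(Real.sqrt p : ℂ), (Real.sqrt (1 - p) : ℂ)]

open scoped ComplexOrder

/-- The set of type-II error probabilities Tr(σ₁ E) over POVM elements 0 ≤ E ≤ I
(Loewner order) whose type-I error is at most ε, i.e. Tr(σ₀ E) ≥ 1-ε. -/
def errSet (n : ℕ) (σ0 σ1 : Matrix (Fin n → Fin 2) (Fin n → Fin 2) ℂ) (ε : ℝ) : Set ℝ :=
  { x | ∃ E : Matrix (Fin n → Fin 2) (Fin n → Fin 2) ℂ,
      E.IsHermitian ∧ E.PosSemidef ∧ (1 - E).PosSemidef ∧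
      1 - ε ≤ ((σ0 * E).trace).re ∧ x = ((σ1 * E).trace).re }

/-- The qubit state √p |0⟩ − √(1-p) |1⟩. -/
def qubitM (p : ℝ) : Fin 2 → ℂ := ![(Real.sqrt p : ℂ), -(Real.sqrt (1 - p) : ℂ)]

lemma fin2_val (a : Fin 2) : (a : ℕ) = if a = 1 then 1 else 0 := by fin_cases a <;> simp

lemma sum_val_eq_ones {n : ℕ} (x : Fin n → Fin 2) : (∑ i, ((x i : ℕ))) = ones x := by
  unfold ones
  rw [Finset.card_filter]
  exact Finset.sum_congr rfl fun i _ => fin2_val (x i)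

lemma parity_sq (n : ℕ) : parityOp n * parityOp n = 1 := by
  unfold parityOp
  rw [Matrix.diagonal_mul_diagonal]
  have h1 : (fun i : Fin n → Fin 2 => (-1:ℂ) ^ ones i * (-1:ℂ) ^ ones i) = fun _ => 1 := by
    funext x; rw [← mul_pow]; norm_num
  rw [h1, Matrix.diagonal_one]

lemma twirl_conj {n : ℕ} (X : Matrix (Fin n → Fin 2) (Fin n → Fin 2) ℂ) :
    twirl (parityOp n * X * parityOp n) = twirl X := by
  unfold twirl
  have : parityOp n * (parityOp n * X * parityOp n) * parityOp n = X := by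
    calc parityOp n * (parityOp n * X * parityOp n) * parityOp n
        = (parityOp n * parityOp n) * X * (parityOp n * parityOp n) := by
          simp only [mul_assoc]
      _ = X := by rw [parity_sq]; simp
  rw [this, add_comm]

lemma trace_twirl {n : ℕ} (X : Matrix (Fin n → Fin 2) (Fin n → Fin 2) ℂ) :
    (twirl X).trace = X.trace := by
  unfold twirl
  rw [Matrix.trace_smul, Matrix.trace_add, Matrix.trace_mul_cycle, parity_sq, one_mul,
    smul_eq_mul]
  ring

lemma trace_mpow (n : ℕ) (ρ : Matrix (Fin 2) (Fin 2) ℂ) :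
    (mpow n ρ).trace = ρ.trace ^ n := by
  rw [Matrix.trace, Matrix.trace, Fintype.sum_pow]
  simp [mpow, Matrix.diag]

lemma trace_projv (ψ : Fin 2 → ℂ) (hunit : ∑ i, Complex.normSq (ψ i) = 1) :
    (projv ψ).trace = 1 := by
  unfold projv Matrix.trace
  simp only [Matrix.diag_apply, vecMulVec_apply, Pi.star_apply]
  have : ∀ a : Fin 2, ψ a * star (ψ a) = (Complex.normSq (ψ a) : ℂ) := fun a => Complex.mul_conj _
  simp only [this]
  rw [← Complex.ofReal_sum]
  norm_cast

lemma mpow_M_eq_conj (n : ℕ) (p : ℝ) :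
    mpow n (projv (qubitM p)) = parityOp n * mpow n (projv (qubitR p)) * parityOp n := by
  have key : ∀ a b : Fin 2, projv (qubitM p) a b =
      (-1:ℂ)^(a:ℕ) * projv (qubitR p) a b * (-1:ℂ)^(b:ℕ) := by
    intro a b
    fin_cases a <;> fin_cases b <;>
      simp [projv, qubitM, qubitR, vecMulVec_apply]
  ext x y
  have lhs : mpow n (projv (qubitM p)) x y
      = ((-1:ℂ) ^ ones x) * mpow n (projv (qubitR p)) x y * ((-1:ℂ) ^ ones y) := by
    simp only [mpow, Matrix.of_apply, key]
    rw [Finset.prod_mul_distrib, Finset.prod_mul_distrib,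
      Finset.prod_pow_eq_pow_sum, Finset.prod_pow_eq_pow_sum,
      sum_val_eq_ones, sum_val_eq_ones]
  rw [lhs]
  simp only [parityOp, Matrix.mul_diagonal, Matrix.diagonal_mul]

/-- If |ψ₀⟩ = |ψ₁⟩, or {|ψ₀⟩,|ψ₁⟩} = {√p|0⟩+√(1-p)|1⟩, √p|0⟩−√(1-p)|1⟩}
for some p ∈ (0,1), then for every n ≥ 1 the minimal type-II error probability under
ℤ₂-invariant measurements with type-I error at most ε equals 1 − ε. -/
theorem typeII_error_const (ε : ℝ) (hε : ε ∈ Set.Ioo (0 : ℝ) 1) (ψ0 ψ1 : Fin 2 → ℂ)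
    (hunit0 : ∑ i, Complex.normSq (ψ0 i) = 1) (hunit1 : ∑ i, Complex.normSq (ψ1 i) = 1)
    (h : ψ0 = ψ1 ∨ ∃ p ∈ Set.Ioo (0 : ℝ) 1,
      ({ψ0, ψ1} : Set (Fin 2 → ℂ)) = {qubitR p, qubitM p}) :
    ∀ n : ℕ, 1 ≤ n →
      sInf (errSet n (twirl (mpow n (projv ψ0))) (twirl (mpow n (projv ψ1))) ε) = 1 - ε := by
  intro n hn
  have hσ : twirl (mpow n (projv ψ1)) = twirl (mpow n (projv ψ0)) := by
    rcases h with h | ⟨p, hp, hset⟩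
    · rw [h]
    · have h0 : ψ0 = qubitR p ∨ ψ0 = qubitM p := by
        have : ψ0 ∈ ({qubitR p, qubitM p} : Set (Fin 2 → ℂ)) := by
          rw [← hset]; exact Set.mem_insert _ _
        simpa using this
      have h1 : ψ1 = qubitR p ∨ ψ1 = qubitM p := by
        have : ψ1 ∈ ({qubitR p, qubitM p} : Set (Fin 2 → ℂ)) := by
          rw [← hset]; exact Set.mem_insert_of_mem _ rfl
        simpa using this
      have tM : twirl (mpow n (projv (qubitM p))) = twirl (mpow n (projv (qubitR p))) := by
        rw [mpow_M_eq_conj, twirl_conj]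
      rcases h0 with h0 | h0 <;> rcases h1 with h1 | h1 <;> simp [h0, h1, tM]
  rw [hσ]
  set σ0 := twirl (mpow n (projv ψ0)) with hσ0
  have htr0 : σ0.trace = 1 := by
    rw [hσ0, trace_twirl, trace_mpow, trace_projv ψ0 hunit0, one_pow]
  have hlb : ∀ x ∈ errSet n σ0 σ0 ε, 1 - ε ≤ x := by
    rintro x ⟨E, _, _, _, htr, hx⟩
    exact hx ▸ htr
  have hmem : (1 - ε) ∈ errSet n σ0 σ0 ε := by
    refine ⟨((1 - ε : ℝ) : ℂ) • 1, ?_, ?_, ?_, ?_, ?_⟩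
    · simp [Matrix.IsHermitian, Matrix.conjTranspose_smul]
    · rw [Matrix.smul_one_eq_diagonal]
      exact Matrix.posSemidef_diagonal_iff.mpr fun i =>
        Complex.zero_le_real.mpr (by linarith [hε.2])
    · have h1 : (1 : Matrix (Fin n → Fin 2) (Fin n → Fin 2) ℂ) - ((1 - ε : ℝ) : ℂ) • 1
          = ((ε : ℝ) : ℂ) • 1 := by
        rw [← one_smul ℂ (1 : Matrix (Fin n → Fin 2) (Fin n → Fin 2) ℂ), smul_smul, ← sub_smul]
        norm_num
      rw [h1, Matrix.smul_one_eq_diagonal]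
      exact Matrix.posSemidef_diagonal_iff.mpr fun i =>
        Complex.zero_le_real.mpr (le_of_lt hε.1)
    · rw [Matrix.mul_smul, mul_one, Matrix.trace_smul, htr0, smul_eq_mul, mul_one,
        Complex.ofReal_re]
    · rw [Matrix.mul_smul, mul_one, Matrix.trace_smul, htr0, smul_eq_mul, mul_one,
        Complex.ofReal_re]
  exact le_antisymm (csInf_le ⟨1 - ε, fun x hx => hlb x hx⟩ hmem) (le_csInf ⟨_, hmem⟩ hlb)
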